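/- The polynomials q_n(x) = (4x²-2) H_{n-1}'(x) - 8x H_{n-1}(x) satisfy, for all n ≥ 1 (with q_{-2} = q_{-1} = 0), the recursion (2/3)(n-1)(n-2)(n-3) q_{n-3}(x) + (n-3)(n-1) q_{n-1}(x) + ((n-3)/2) q_{n+1}(x) + ((n-3)/(12n)) q_{n+3}(x) = ((2x³/3) - x) q_n(x). -/

import Mathlib

open Polynomial

/-!
Both sides are expanded in the Hermite basis. Since `H_{k+1} = 2x H_k - 2k H_{k-1}` and
`H_k' = 2k H_{k-1}`, each `q_{m+4}` is a combination of `H_{m+4}, H_{m+2}, H_m`, while the factor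
`2x³/3 - x` is `H_3 / 12`, and `H_3 H_{m+3}` linearizes into `H_{m+6}, H_{m+4}, H_{m+2}, H_m`.
For `n ≥ 7` every index stays nonnegative and the recursion becomes an identity between the
coefficients of six Hermite polynomials; the cases `n < 7` are checked directly.
-/

noncomputable def physHermite : ℕ → Polynomial ℝ
  | 0 => 1
  | n + 1 => C 2 * X * physHermite n - derivative (physHermite n)

noncomputable def qGap (k : ℤ) : Polynomial ℝ :=
  if 1 ≤ k then
    (C 4 * X ^ 2 - C 2) * derivative (physHermite (k - 1).toNat)
      - C 8 * X * physHermite (k - 1).toNat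
  else 0

theorem physHermite_succ (m : ℕ) :
    physHermite (m + 1) = (2 : ℝ) • (X * physHermite m) - derivative (physHermite m) := by
  rw [physHermite, mul_assoc, C_mul']

theorem derivative_physHermite_succ (m : ℕ) :
    derivative (physHermite (m + 1)) = (2 * (m + 1) : ℝ) • physHermite m := by
  induction m with
  | zero => simp [physHermite, ← C_mul']
  | succ m ih =>
    rw [physHermite_succ, derivative_sub, derivative_smul, derivative_mul, derivative_X, ih,
      derivative_smul, mul_smul_comm, one_mul]
    push_cast
    linear_combination (norm := module) (-(2 * (m + 1) : ℝ)) • physHermite_succ m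

theorem X_mul_physHermite_succ (m : ℕ) :
    X * physHermite (m + 1) =
      (1 / 2 : ℝ) • physHermite (m + 2) + ((m : ℝ) + 1) • physHermite m := by
  rw [physHermite_succ (m + 1), derivative_physHermite_succ]
  module

theorem physHermite_three : physHermite 3 = (8 : ℝ) • X ^ 3 - (12 : ℝ) • X := by
  simp [physHermite, smul_eq_C_mul, map_ofNat]
  ring

theorem physHermite_three_mul (m : ℕ) :
    physHermite 3 * physHermite (m + 3) = physHermite (m + 6)
      + (6 * (m + 3) : ℝ) • physHermite (m + 4)
      + (12 * (m + 3) * (m + 2) : ℝ) • physHermite (m + 2)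
      + (8 * (m + 3) * (m + 2) * (m + 1) : ℝ) • physHermite m := by
  simp only [physHermite_three, sub_mul, smul_mul_assoc, pow_succ, pow_zero, one_mul, mul_assoc,
    X_mul_physHermite_succ, mul_add, mul_smul_comm, Nat.add_assoc, Nat.reduceAdd]
  push_cast
  module

theorem qGap_natCast_add_four (m : ℕ) :
    qGap ↑(m + 4) = (2 * (m + 1) : ℝ) • physHermite (m + 4)
      + (8 * (m + 3) * (m + 1) : ℝ) • physHermite (m + 2)
      + (8 * (m + 3) * (m + 2) * (m + 1) : ℝ) • physHermite m := by
  rw [qGap, if_pos (by omega), show ((↑(m + 4) : ℤ) - 1).toNat = m + 2 + 1 by omega,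
    derivative_physHermite_succ]
  simp only [sub_mul, mul_assoc, C_mul', pow_two, mul_smul_comm, smul_mul_assoc,
    X_mul_physHermite_succ, mul_add, Nat.add_assoc, Nat.reduceAdd]
  push_cast
  module

/-- The recursion
`(2/3)(n-1)(n-2)(n-3) q_{n-3} + (n-3)(n-1) q_{n-1} + ((n-3)/2) q_{n+1} + ((n-3)/(12n)) q_{n+3}
 = ((2x³/3) - x) q_n` for all `n ≥ 1`. -/
theorem two_gap_recursion (n : ℕ) (hn : 1 ≤ n) :
    C ((2 / 3 : ℝ) * ((n : ℝ) - 1) * ((n : ℝ) - 2) * ((n : ℝ) - 3)) * qGap ((n : ℤ) - 3)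
      + C (((n : ℝ) - 3) * ((n : ℝ) - 1)) * qGap ((n : ℤ) - 1)
      + C (((n : ℝ) - 3) / 2) * qGap ((n : ℤ) + 1)
      + C (((n : ℝ) - 3) / (12 * (n : ℝ))) * qGap ((n : ℤ) + 3) =
    (C (2 / 3 : ℝ) * X ^ 3 - X) * qGap (n : ℤ) := by
  rcases lt_or_ge n 7 with hsmall | hlarge
  · -- `zero_eq_mul` would turn the case `n = 3`, where both sides vanish, into a disjunction
    interval_cases n <;> refine Polynomial.funext fun x => ?_ <;>
      simp [qGap, physHermite, -zero_eq_mul] <;> ring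
  · obtain ⟨j, rfl⟩ := Nat.exists_eq_add_of_le' hlarge
    have hH3 : C (2 / 3 : ℝ) * X ^ 3 - X = (1 / 12 : ℝ) • physHermite 3 := by
      rw [physHermite_three, C_mul']
      module
    rw [show ((j + 7 : ℕ) : ℤ) - 3 = ↑(j + 4) by push_cast; ring,
      show ((j + 7 : ℕ) : ℤ) - 1 = ↑(j + 2 + 4) by push_cast; ring,
      show ((j + 7 : ℕ) : ℤ) + 1 = ↑(j + 4 + 4) by push_cast; ring,
      show ((j + 7 : ℕ) : ℤ) + 3 = ↑(j + 6 + 4) by push_cast; ring,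
      show j + 7 = j + 3 + 4 by ring, hH3]
    simp only [qGap_natCast_add_four, C_mul', smul_mul_assoc, mul_add, mul_smul_comm,
      Nat.add_assoc, Nat.reduceAdd, physHermite_three_mul]
    match_scalars <;> field_simp <;> ring
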